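/- arXiv:0710.2641 — 3 statements merged into one kernel-verified Lean document; each statement's English description precedes it below -/
import Mathlib

section
/- Let P be graded by positive weights W = (w_1,…,w_n), let O be an order ideal, and let I ⊂ P be a homogeneous zero-dimensional ideal that has an O-border basis G = {g_1,…,g_ν}. Then every g_j is a homogeneous polynomial (of degree deg_W(b_j)). -/
open MvPolynomial Finsupp

open scoped Classical in
/-- The border of a finite set of monomials (represented as exponent vectors). -/
noncomputable def borderSet (n : ℕ) (O : Finset (Fin n →₀ ℕ)) : Finset (Fin n →₀ ℕ) :=
  (O.biUnion (fun t => Finset.image (fun k => t + Finsupp.single k 1) Finset.univ)) \ O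

/-- The `W`-degree of a monomial with respect to the weights `w`. -/
def degW (n : ℕ) (w : Fin n → ℕ) (m : Fin n →₀ ℕ) : ℕ := ∑ i, w i * m i

/-- `g` is an `O`-border basis of `I`: each `g b` (for `b` in the border) lies in `I` and has
the prebasis shape `b - Σ c_i t_i`, and `P = I ⊕ ⟨O⟩_K` as `K`-vector spaces. -/
def IsBorderBasis (K : Type*) [Field K] (n : ℕ) (O : Finset (Fin n →₀ ℕ))
    (I : Ideal (MvPolynomial (Fin n) K)) (g : (Fin n →₀ ℕ) → MvPolynomial (Fin n) K) : Prop :=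
  (∀ b ∈ borderSet n O, g b ∈ I ∧ ∃ c : (Fin n →₀ ℕ) → K,
      g b = monomial b 1 - ∑ t ∈ O, MvPolynomial.C (c t) * monomial t 1) ∧
  IsCompl (Submodule.restrictScalars K I)
    (Submodule.span K {p : MvPolynomial (Fin n) K | ∃ t ∈ O, p = monomial t 1})

/-! The support of `g b` lies in `{b} ∪ O`. For a degree `d ≠ deg_W(b)`, the degree-`d` component
of `g b` lies in `I` (as `I` is homogeneous) and is supported on `O`, so it lies in
`I ∩ ⟨O⟩_K = 0`. -/

theorem degW_eq_weight (n : ℕ) (w : Fin n → ℕ) (m : Fin n →₀ ℕ) : degW n w m = weight w m := by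
  simp [degW, weight_apply, Finsupp.sum_fintype, mul_comm]

theorem support_monomial_sub_sum_subset {σ R : Type*} [CommRing R] [DecidableEq σ] (b : σ →₀ ℕ)
    (O : Finset (σ →₀ ℕ)) (c : (σ →₀ ℕ) → R) :
    (monomial b 1 - ∑ t ∈ O, C (c t) * monomial t 1).support ⊆ insert b O := by
  refine (support_sub _ _ _).trans (Finset.union_subset ?_ ?_)
  · exact support_monomial_subset.trans (by simp)
  · refine MvPolynomial.support_sum.trans (Finset.biUnion_subset.mpr fun t ht => ?_)
    rw [C_mul_monomial, mul_one]
    exact support_monomial_subset.trans (by simp [ht])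

theorem span_monomials_eq_restrictSupport {σ R : Type*} [CommRing R] (O : Finset (σ →₀ ℕ)) :
    Submodule.span R {p : MvPolynomial σ R | ∃ t ∈ O, p = monomial t 1} =
      restrictSupport R (O : Set (σ →₀ ℕ)) := by
  rw [restrictSupport_eq_span]
  congr 1
  ext p
  simp [eq_comm]

namespace IsBorderBasis

variable {K : Type*} [Field K] {n : ℕ} {O : Finset (Fin n →₀ ℕ)}
  {I : Ideal (MvPolynomial (Fin n) K)} {g : (Fin n →₀ ℕ) → MvPolynomial (Fin n) K}

theorem support_subset (hg : IsBorderBasis K n O I g) {b : Fin n →₀ ℕ} (hb : b ∈ borderSet n O) :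
    (g b).support ⊆ insert b O := by
  obtain ⟨c, hc⟩ := (hg.1 b hb).2
  exact hc ▸ support_monomial_sub_sum_subset b O c

theorem eq_zero_of_mem_of_support_subset (hg : IsBorderBasis K n O I g)
    {p : MvPolynomial (Fin n) K} (hpI : p ∈ I) (hpO : (p.support : Set (Fin n →₀ ℕ)) ⊆ O) :
    p = 0 := by
  refine Submodule.disjoint_def.mp hg.2.disjoint p hpI ?_
  rw [span_monomials_eq_restrictSupport]
  exact (mem_restrictSupport_iff K).mpr hpO

theorem isWeightedHomogeneous {M : Type*} [AddCommMonoid M] (hg : IsBorderBasis K n O I g)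
    (w : Fin n → M) (hI : ∀ f ∈ I, ∀ d : M, weightedHomogeneousComponent w d f ∈ I)
    {b : Fin n →₀ ℕ} (hb : b ∈ borderSet n O) :
    IsWeightedHomogeneous w (g b) (weight w b) := by
  classical
  intro m hm
  by_contra hne
  set comp := weightedHomogeneousComponent w (weight w m) (g b)
  have comp_support_subset : (comp.support : Set (Fin n →₀ ℕ)) ⊆ O := by
    intro m' hm'
    rw [Finset.mem_coe, support_weightedHomogeneousComponent, Finset.mem_filter] at hm'
    obtain ⟨hm'g, hm'w⟩ := hm'
    rcases Finset.mem_insert.mp (hg.support_subset hb hm'g) with rfl | hm'O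
    · exact absurd hm'w.symm hne
    · exact hm'O
  have comp_eq_zero : comp = 0 :=
    hg.eq_zero_of_mem_of_support_subset (hI _ (hg.1 b hb).1 _) comp_support_subset
  have coeff_comp : coeff m comp = coeff m (g b) := by
    rw [coeff_weightedHomogeneousComponent, if_pos rfl]
  exact hm (coeff_comp ▸ comp_eq_zero ▸ coeff_zero m)

end IsBorderBasis

theorem borderBasis_of_homogeneous_ideal_is_homogeneous_general (K : Type*) [Field K] (n : ℕ)
    (w : Fin n → ℕ)
    (O : Finset (Fin n →₀ ℕ))
    (I : Ideal (MvPolynomial (Fin n) K))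
    (hIhom : ∀ f ∈ I, ∀ d : ℕ,
      (∑ m ∈ f.support.filter (fun m => degW n w m = d), monomial m (coeff m f)) ∈ I)
    (g : (Fin n →₀ ℕ) → MvPolynomial (Fin n) K)
    (hg : IsBorderBasis K n O I g) :
    ∀ b ∈ borderSet n O, ∀ m ∈ (g b).support, degW n w m = degW n w b := by
  have hI : ∀ f ∈ I, ∀ d : ℕ, weightedHomogeneousComponent w d f ∈ I := by
    intro f hf d
    simpa only [weightedHomogeneousComponent_apply, degW_eq_weight] using hIhom f hf d
  intro b hb m hm
  simpa only [degW_eq_weight] using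
    hg.isWeightedHomogeneous w hI hb (MvPolynomial.mem_support_iff.mp hm)

/-- If a `W`-homogeneous zero-dimensional ideal has an `O`-border basis, then each border basis
element `g b` is homogeneous of `W`-degree `deg_W(b)`. -/
theorem borderBasis_of_homogeneous_ideal_is_homogeneous (K : Type*) [Field K] (n : ℕ)
    (w : Fin n → ℕ) (hw : ∀ i, 0 < w i)
    (O : Finset (Fin n →₀ ℕ)) (hO : ∀ t ∈ O, ∀ s : Fin n →₀ ℕ, s ≤ t → s ∈ O)
    (I : Ideal (MvPolynomial (Fin n) K))
    (hIhom : ∀ f ∈ I, ∀ d : ℕ,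
      (∑ m ∈ f.support.filter (fun m => degW n w m = d), monomial m (coeff m f)) ∈ I)
    (g : (Fin n →₀ ℕ) → MvPolynomial (Fin n) K)
    (hg : IsBorderBasis K n O I g) :
    ∀ b ∈ borderSet n O, ∀ m ∈ (g b).support, degW n w m = degW n w b :=
  borderBasis_of_homogeneous_ideal_is_homogeneous_general K n w O I hIhom g hg
end

section
/- If a zero-dimensional ideal I has an O-border basis, then its border form ideal BF_O(I) equals the border term ideal BT_O = (b_1,…,b_ν). -/
open MvPolynomial Finsupp

/-- Cumulative layers `O ∪ ∂O ∪ ⋯ ∪ ∂ⁱO` of an order ideal. -/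
def layers (n : ℕ) (O : Finset (Fin n →₀ ℕ)) : ℕ → Set (Fin n →₀ ℕ)
  | 0 => ↑O
  | i + 1 => layers n O i ∪
      {m | ∃ k : Fin n, ∃ t ∈ layers n O i, m = t + Finsupp.single k 1}

/-- The `O`-index of a monomial: the least `i` with `t ∈ ∂ⁱO`. -/
noncomputable def indO (n : ℕ) (O : Finset (Fin n →₀ ℕ)) (t : Fin n →₀ ℕ) : ℕ :=
  sInf {i | t ∈ layers n O i}

/-- The border form `BF_O(f)`: the sum of the terms of `f` whose monomials have maximal
`O`-index. -/
noncomputable def BF (K : Type*) [Field K] (n : ℕ) (O : Finset (Fin n →₀ ℕ))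
    (f : MvPolynomial (Fin n) K) : MvPolynomial (Fin n) K :=
  ∑ m ∈ f.support.filter (fun m => indO n O m = f.support.sup (indO n O)),
    monomial m (coeff m f)

/-!
A nonzero `f ∈ I` cannot be supported on `O`, because `I ∩ ⟨O⟩_K = 0`. Hence the terms of
`BF_O(f)`, having maximal `O`-index, lie outside `O`, and every monomial outside `O`
is a multiple of a border term: a minimal monomial outside `O` is a border term, since removing
one variable from it lands in `O`. Conversely, `b` is the only term of the border basis element
`g_b = b - Σ c_t t` outside `O`, so `BF_O(g_b) = b`.
-/

lemma coeff_monomial_sub_sum_of_notMem {σ R : Type*} [CommRing R] {s : Finset (σ →₀ ℕ)}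
    {b m : σ →₀ ℕ} (c : (σ →₀ ℕ) → R) (hm : m ∉ s) :
    coeff m (monomial b 1 - ∑ t ∈ s, C (c t) * monomial t 1) = coeff m (monomial b 1) := by
  classical
  rw [coeff_sub, coeff_sum, Finset.sum_eq_zero, sub_zero]
  intro t ht
  rw [coeff_C_mul, coeff_monomial, if_neg (ne_of_mem_of_not_mem ht hm), mul_zero]

noncomputable def borderTermIdeal (R : Type*) [CommSemiring R] (n : ℕ)
    (O : Finset (Fin n →₀ ℕ)) : Ideal (MvPolynomial (Fin n) R) :=
  Ideal.span {p | ∃ b ∈ borderSet n O, p = monomial b 1}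

section BorderForm

variable {n : ℕ} {O : Finset (Fin n →₀ ℕ)}

lemma exists_eq_add_single_of_ne_zero {m : Fin n →₀ ℕ} (hm : m ≠ 0) :
    ∃ k m', m = m' + Finsupp.single k 1 ∧ m' < m := by
  obtain ⟨k, hk⟩ := Finsupp.ne_iff.mp hm
  have hle : Finsupp.single k 1 ≤ m := by
    rw [Finsupp.single_le_iff]
    exact Nat.one_le_iff_ne_zero.mpr hk
  have hm' : m = (m - Finsupp.single k 1) + Finsupp.single k 1 := (tsub_add_cancel_of_le hle).symm
  refine ⟨k, m - Finsupp.single k 1, hm', ?_⟩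
  conv_rhs => rw [hm']
  exact lt_add_of_pos_right _ (pos_iff_ne_zero.mpr (Finsupp.single_ne_zero.mpr one_ne_zero))

lemma mem_borderSet_iff {b : Fin n →₀ ℕ} :
    b ∈ borderSet n O ↔ (∃ t ∈ O, ∃ k, b = t + Finsupp.single k 1) ∧ b ∉ O := by
  classical
  simp only [borderSet, Finset.mem_sdiff, Finset.mem_biUnion, Finset.mem_image,
    Finset.mem_univ, true_and, eq_comm]

lemma exists_mem_layers (h0 : 0 ∈ O) (m : Fin n →₀ ℕ) : ∃ i, m ∈ layers n O i := by
  induction m using WellFoundedLT.induction with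
  | _ m ih =>
    obtain rfl | hm := eq_or_ne m 0
    · exact ⟨0, h0⟩
    obtain ⟨k, m', rfl, hlt⟩ := exists_eq_add_single_of_ne_zero hm
    obtain ⟨i, hi⟩ := ih m' hlt
    exact ⟨i + 1, Or.inr ⟨k, m', hi, rfl⟩⟩

lemma indO_eq_zero_iff (h0 : 0 ∈ O) {m : Fin n →₀ ℕ} : indO n O m = 0 ↔ m ∈ O :=
  Nat.sInf_eq_zero.trans (or_iff_left (Set.nonempty_def.mpr (exists_mem_layers h0 m)).ne_empty)

lemma indO_pos_iff (h0 : 0 ∈ O) {m : Fin n →₀ ℕ} : 0 < indO n O m ↔ m ∉ O :=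
  pos_iff_ne_zero.trans (indO_eq_zero_iff h0).not

lemma exists_mem_borderSet_le (h0 : 0 ∈ O) {m : Fin n →₀ ℕ} (hm : m ∉ O) :
    ∃ b ∈ borderSet n O, b ≤ m := by
  obtain ⟨b, ⟨hbm, hbO⟩, hmin⟩ :=
    wellFounded_lt.has_min {s | s ≤ m ∧ s ∉ O} ⟨m, le_rfl, hm⟩
  have hb0 : b ≠ 0 := by
    rintro rfl
    exact hbO h0
  obtain ⟨k, t, rfl, hlt⟩ := exists_eq_add_single_of_ne_zero hb0
  have htO : t ∈ O := by
    by_contra htO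
    exact hmin t ⟨hlt.le.trans hbm, htO⟩ hlt
  exact ⟨_, mem_borderSet_iff.mpr ⟨⟨t, htO, k, rfl⟩, hbO⟩, hbm⟩

variable {K : Type*} [Field K]

lemma monomial_mem_borderTermIdeal (h0 : 0 ∈ O) {m : Fin n →₀ ℕ} (hm : m ∉ O) (c : K) :
    monomial m c ∈ borderTermIdeal K n O := by
  obtain ⟨b, hb, hbm⟩ := exists_mem_borderSet_le h0 hm
  rw [← tsub_add_cancel_of_le hbm, ← mul_one c, ← monomial_mul]
  exact Ideal.mul_mem_left _ _ (Ideal.subset_span ⟨b, hb, rfl⟩)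

lemma span_monomial_eq_restrictSupport :
    Submodule.span K {p : MvPolynomial (Fin n) K | ∃ t ∈ O, p = monomial t 1} =
      restrictSupport K ↑O := by
  rw [restrictSupport_eq_span]
  congr 1
  ext p
  simp [eq_comm]

lemma exists_mem_support_notMem {I : Ideal (MvPolynomial (Fin n) K)}
    (hI : Disjoint (I.restrictScalars K)
      (Submodule.span K {p : MvPolynomial (Fin n) K | ∃ t ∈ O, p = monomial t 1}))
    {f : MvPolynomial (Fin n) K} (hfI : f ∈ I) (hf0 : f ≠ 0) :
    ∃ m ∈ f.support, m ∉ O := by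
  by_contra! h
  refine hf0 (Submodule.disjoint_def.mp hI f hfI ?_)
  rw [span_monomial_eq_restrictSupport, mem_restrictSupport_iff]
  exact h

lemma BF_mem_borderTermIdeal (h0 : 0 ∈ O) {f : MvPolynomial (Fin n) K}
    (hf : ∃ m ∈ f.support, m ∉ O) : BF K n O f ∈ borderTermIdeal K n O := by
  obtain ⟨m₀, hm₀, hm₀O⟩ := hf
  refine Ideal.sum_mem _ fun m hm => monomial_mem_borderTermIdeal h0 ?_ _
  rw [Finset.mem_filter] at hm
  rw [← indO_pos_iff h0, hm.2]
  exact ((indO_pos_iff h0).mpr hm₀O).trans_le (Finset.le_sup hm₀)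

lemma BF_eq_monomial (h0 : 0 ∈ O) {f : MvPolynomial (Fin n) K} {b : Fin n →₀ ℕ}
    (hbO : b ∉ O) (hf : ∀ m ∉ O, coeff m f = coeff m (monomial b 1)) :
    BF K n O f = monomial b 1 := by
  have hsupp : ∀ m ∈ f.support, m ∉ O → m = b := by
    intro m hm hmO
    rw [MvPolynomial.mem_support_iff, hf m hmO, coeff_monomial] at hm
    exact (ite_ne_right_iff.mp hm).1.symm
  have hb : b ∈ f.support := by
    rw [MvPolynomial.mem_support_iff, hf b hbO, coeff_monomial, if_pos rfl]
    exact one_ne_zero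
  have hb_pos : 0 < indO n O b := (indO_pos_iff h0).mpr hbO
  have hsup : f.support.sup (indO n O) = indO n O b := by
    refine le_antisymm (Finset.sup_le fun m hm => ?_) (Finset.le_sup hb)
    by_cases hmO : m ∈ O
    · exact ((indO_eq_zero_iff h0).mpr hmO).trans_le hb_pos.le
    · rw [hsupp m hm hmO]
  have hfilter : f.support.filter (fun m => indO n O m = f.support.sup (indO n O)) = {b} := by
    ext m
    rw [Finset.mem_filter, Finset.mem_singleton, hsup]
    constructor
    · rintro ⟨hm, hmb⟩
      refine hsupp m hm fun hmO => hb_pos.ne ?_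
      rw [← hmb, (indO_eq_zero_iff h0).mpr hmO]
    · rintro rfl
      exact ⟨hb, rfl⟩
  rw [BF, hfilter, Finset.sum_singleton, hf b hbO, coeff_monomial, if_pos rfl]

end BorderForm

/-- If a zero-dimensional ideal `I` has an `O`-border basis, then its border form ideal
`BF_O(I)` equals the border term ideal `BT_O`. -/
theorem borderFormIdeal_eq_borderTermIdeal (K : Type*) [Field K] (n : ℕ)
    (O : Finset (Fin n →₀ ℕ)) (hne : O.Nonempty)
    (hO : ∀ t ∈ O, ∀ s : Fin n →₀ ℕ, s ≤ t → s ∈ O)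
    (I : Ideal (MvPolynomial (Fin n) K))
    (g : (Fin n →₀ ℕ) → MvPolynomial (Fin n) K)
    (hg : IsBorderBasis K n O I g) :
    Ideal.span {p : MvPolynomial (Fin n) K | ∃ f ∈ I, f ≠ 0 ∧ p = BF K n O f} =
      Ideal.span {p : MvPolynomial (Fin n) K | ∃ b ∈ borderSet n O, p = monomial b 1} := by
  obtain ⟨t, ht⟩ := hne
  have h0 : 0 ∈ O := hO t ht 0 zero_le
  refine le_antisymm (Ideal.span_le.mpr ?_) (Ideal.span_le.mpr ?_)
  · rintro _ ⟨f, hfI, hf0, rfl⟩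
    exact BF_mem_borderTermIdeal h0 (exists_mem_support_notMem hg.2.disjoint hfI hf0)
  · rintro _ ⟨b, hb, rfl⟩
    obtain ⟨hgI, c, hc⟩ := hg.1 b hb
    have hBF : BF K n O (g b) = monomial b 1 :=
      BF_eq_monomial h0 (mem_borderSet_iff.mp hb).2 fun m hm => by
        rw [hc, coeff_monomial_sub_sum_of_notMem c hm]
    have hgb : g b ≠ 0 := by
      rintro h
      simp only [h, BF, MvPolynomial.support_zero, Finset.filter_empty, Finset.sum_empty] at hBF
      exact one_ne_zero (monomial_eq_zero.mp hBF.symm)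
    exact Ideal.subset_span ⟨g b, hgI, hgb, hBF.symm⟩
end

section
/- For n = 2 and O = {1, x, y, xy} with border ∂O = {y², x², xy², x²y}, the vanishing ideal I(B_O) ⊂ K[c_{11},…,c_{44}] of the border basis scheme contains, for each of the eight variables c_{11}, c_{12}, c_{13}, c_{14}, c_{22}, c_{24}, c_{31}, c_{33}, a generator of the form (that variable) minus a polynomial in the remaining eight variables c_{21}, c_{23}, c_{32}, c_{34}, c_{41}, c_{42}, c_{43}, c_{44}; consequently B_O = K[c_{ij}]/I(B_O) is isomorphic as a K-algebra to the polynomial ring K[c_{21}, c_{23}, c_{32}, c_{34}, c_{41}, c_{42}, c_{43}, c_{44}]. -/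
/-!
Single entries of `A_x A_y − A_y A_x` express `c₁₁, c₁₂, c₁₃, c₁₄, c₂₂, c₂₄, c₃₁, c₃₃` one after
another through earlier ones and the free coordinates `c₂₁, c₂₃, c₃₂, c₃₄, c₄₁, c₄₂, c₄₃, c₄₄`. So
a commuting pair of such matrices over any `K`-algebra is determined by its free coordinates via
explicit polynomials, and conversely these polynomials make the two matrices commute for every
choice of the free coordinates. Substituting them is therefore a surjection
`K[c_{ij}] → K[t₁, …, t₈]`, split by the inclusion of the free variables, with kernel `I(𝔹_O)`.
-/

open MvPolynomial

/-- The generic coefficient `c_{(i+1)(j+1)}` for `O = {1, x, y, xy}` (zero-based indices: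
`i` indexes the order ideal term, `j` the border term). -/
noncomputable def cgen (K : Type*) [Field K] (i j : Fin 4) :
    MvPolynomial (Fin 4 × Fin 4) K := X (i, j)

/-- The generic multiplication matrix `A_x` for `O = {1, x, y, xy}` with border
`{y², x², xy², x²y}`. -/
noncomputable def Ax (K : Type*) [Field K] :
    Matrix (Fin 4) (Fin 4) (MvPolynomial (Fin 4 × Fin 4) K) :=
  !![0, cgen K 0 1, 0, cgen K 0 3;
     1, cgen K 1 1, 0, cgen K 1 3;
     0, cgen K 2 1, 0, cgen K 2 3;
     0, cgen K 3 1, 1, cgen K 3 3]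

/-- The generic multiplication matrix `A_y` for `O = {1, x, y, xy}`. -/
noncomputable def Ay (K : Type*) [Field K] :
    Matrix (Fin 4) (Fin 4) (MvPolynomial (Fin 4 × Fin 4) K) :=
  !![0, 0, cgen K 0 0, cgen K 0 2;
     0, 0, cgen K 1 0, cgen K 1 2;
     1, 0, cgen K 2 0, cgen K 2 2;
     0, 1, cgen K 3 0, cgen K 3 2]

/-- The vanishing ideal `I(𝔹_O)` of the border basis scheme for `O = {1, x, y, xy}`:
generated by the entries of `A_x A_y − A_y A_x`. -/
noncomputable def IbbsXY (K : Type*) [Field K] : Ideal (MvPolynomial (Fin 4 × Fin 4) K) :=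
  Ideal.span {p | ∃ i j : Fin 4, p = (Ax K * Ay K - Ay K * Ax K) i j}

theorem RingHom.ker_eq_of_mk_comp_eq {A B : Type*} [CommRing A] [Semiring B] {I : Ideal A}
    {f : A →+* B} (g : B →+* A) (hI : I ≤ ker f)
    (hgf : ∀ a, Ideal.Quotient.mk I (g (f a)) = Ideal.Quotient.mk I a) : ker f = I := by
  refine le_antisymm (fun a ha => ?_) hI
  rw [← Ideal.Quotient.eq_zero_iff_mem, ← hgf, mem_ker.1 ha, map_zero, map_zero]

namespace BorderBasis1xy

/-- `c₂₁, c₂₃, c₃₂, c₃₄, c₄₁, c₄₂, c₄₃, c₄₄` in the zero-based indexing of `cgen`. -/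
def freeIdx : Fin 8 → Fin 4 × Fin 4 :=
  ![(1, 0), (1, 2), (2, 1), (2, 3), (3, 0), (3, 1), (3, 2), (3, 3)]

theorem range_freeIdx :
    Set.range freeIdx = {(1, 0), (1, 2), (2, 1), (2, 3), (3, 0), (3, 1), (3, 2), (3, 3)} := by
  ext u
  simp only [freeIdx, Matrix.range_cons, Matrix.range_empty, Set.union_empty, Set.singleton_union,
    Set.mem_insert_iff, Set.mem_singleton_iff]

/-- The solution of the triangular system for all sixteen coordinates, in terms of the free
coordinates `t` listed in the order of `freeIdx`. -/
def param {S : Type*} [CommRing S] (t : Fin 8 → S) (u : Fin 4 × Fin 4) : S :=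
  !![t 1 - t 1 * t 4 * t 5 - t 0 * t 7 + t 0 * t 5 * t 6,
     t 3 - t 3 * t 4 * t 5 - t 2 * t 6 + t 2 * t 4 * t 7,
     t 1 * t 2 * t 4 + t 0 * t 3 - t 0 * t 2 * t 6,
     t 1 * t 2 + t 0 * t 3 * t 5 - t 0 * t 2 * t 7;
     t 0, t 7 - t 5 * t 6 - t 2 * t 4, t 1, t 1 * t 5 + t 0 * t 2;
     t 6 - t 4 * t 7 - t 0 * t 5, t 2, t 3 * t 4 + t 0 * t 2, t 3;
     t 4, t 5, t 6, t 7] u.1 u.2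

section Param

variable {S T : Type*} [CommRing S] [CommRing T]

theorem param_freeIdx (t : Fin 8 → S) (k : Fin 8) : param t (freeIdx k) = t k := by
  fin_cases k <;> rfl

theorem map_param {F : Type*} [FunLike F S T] [RingHomClass F S T] (f : F) (t : Fin 8 → S)
    (u : Fin 4 × Fin 4) :
    f (param t u) = param (f ∘ t) u := by
  obtain ⟨i, j⟩ := u
  fin_cases i <;> fin_cases j <;> simp [param]

theorem param_mem_adjoin {R : Type*} [CommRing R] [Algebra R S] (t : Fin 8 → S)
    (u : Fin 4 × Fin 4) : param t u ∈ Algebra.adjoin R (Set.range t) := by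
  rw [← aeval_range]
  refine ⟨param X u, ?_⟩
  simpa only [AlgHom.toRingHom_eq_coe, RingHom.coe_coe, Function.comp_def, aeval_X] using
    map_param (aeval (R := R) t) X u

end Param

section Points

variable {K S : Type*} [Field K] [CommRing S] [Algebra K S]

theorem IbbsXY_le_ker_iff_commute (f : MvPolynomial (Fin 4 × Fin 4) K →ₐ[K] S) :
    IbbsXY K ≤ RingHom.ker f ↔ Commute ((Ax K).map f) ((Ay K).map f) := by
  have hmap : (Ax K * Ay K - Ay K * Ax K).map f
      = (Ax K).map f * (Ay K).map f - (Ay K).map f * (Ax K).map f := by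
    rw [Matrix.map_sub _ (map_sub f), Matrix.map_mul, Matrix.map_mul]
  rw [Commute, SemiconjBy, ← sub_eq_zero, ← hmap, IbbsXY, Ideal.span_le]
  constructor
  · intro h
    ext i j
    exact RingHom.mem_ker.1 (h ⟨i, j, rfl⟩)
  · rintro h _ ⟨i, j, rfl⟩
    exact RingHom.mem_ker.2 (congrFun (congrFun h i) j)

theorem commute_map_aeval_param (t : Fin 8 → S) :
    Commute ((Ax K).map (aeval (param t))) ((Ay K).map (aeval (param t))) := by
  refine Matrix.ext fun i j => ?_
  fin_cases i <;> fin_cases j <;>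
    simp only [Ax, Ay, cgen, param, Fin.isValue, Fin.zero_eta, Fin.mk_one, Fin.reduceFinMk,
      Matrix.mul_apply, Matrix.map_apply, Matrix.of_apply, Matrix.cons_val', Matrix.cons_val,
      Matrix.cons_val_zero, Matrix.cons_val_one, Matrix.cons_val_fin_one, Fin.sum_univ_four,
      map_zero, map_one, aeval_X, zero_mul, one_mul, mul_zero, mul_one, zero_add, add_zero] <;>
    ring

theorem eq_param_of_commute (c : Fin 4 × Fin 4 → S)
    (h : Commute ((Ax K).map (aeval c)) ((Ay K).map (aeval c))) : c = param (c ∘ freeIdx) := by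
  have entry (i j : Fin 4) := congrFun (congrFun h i) j
  have e01 := entry 0 1
  have e11 := entry 1 1
  have e12 := entry 1 2
  have e13 := entry 1 3
  have e21 := entry 2 1
  have e22 := entry 2 2
  have e31 := entry 3 1
  have e32 := entry 3 2
  simp only [Matrix.mul_apply, Fin.sum_univ_four, Ax, Ay, cgen, Matrix.map_apply, Matrix.of_apply,
    Matrix.cons_val', Matrix.cons_val, Matrix.cons_val_fin_one, map_zero, map_one, aeval_X,
    zero_mul, one_mul, mul_zero, zero_add, add_zero] at e01 e11 e12 e13 e21 e22 e31 e32
  have h11 : c (1, 1) = c (3, 3) - c (3, 1) * c (3, 2) - c (2, 1) * c (3, 0) := by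
    linear_combination -e31
  have h13 : c (1, 3) = c (1, 0) * c (2, 1) + c (1, 2) * c (3, 1) := by linear_combination e11
  have h20 : c (2, 0) = c (3, 2) - c (3, 0) * c (3, 3) - c (1, 0) * c (3, 1) := by
    linear_combination e32
  have h22 : c (2, 2) = c (2, 3) * c (3, 0) + c (1, 0) * c (2, 1) := by linear_combination -e22
  have h00 : c (0, 0) = c (1, 2) - c (1, 1) * c (1, 0) - c (1, 3) * c (3, 0) := by
    linear_combination e12
  have h02 : c (0, 2) = c (1, 0) * c (2, 3) + c (1, 2) * c (3, 3) - c (1, 1) * c (1, 2)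
      - c (1, 3) * c (3, 2) := by
    linear_combination e13
  have h01 : c (0, 1) = c (2, 3) - c (2, 0) * c (2, 1) - c (2, 2) * c (3, 1) := by
    linear_combination -e21
  have h03 : c (0, 3) = c (0, 0) * c (2, 1) + c (0, 2) * c (3, 1) := by linear_combination e01
  ext ⟨i, j⟩
  fin_cases i <;> fin_cases j <;>
    simp only [param, freeIdx, Fin.isValue, Fin.zero_eta, Fin.mk_one, Fin.reduceFinMk,
      Function.comp_apply, Matrix.of_apply, Matrix.cons_val', Matrix.cons_val, Matrix.cons_val_zero,
      Matrix.cons_val_one, Matrix.cons_val_fin_one, h00, h01, h02, h03, h11, h13, h20, h22] <;>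
    ring

end Points

variable (K : Type*) [Field K]

theorem mk_param_X_freeIdx (u : Fin 4 × Fin 4) :
    Ideal.Quotient.mk (IbbsXY K) (param (fun k => X (freeIdx k)) u)
      = Ideal.Quotient.mk (IbbsXY K) (X u) := by
  let mk := Ideal.Quotient.mkₐ K (IbbsXY K)
  have hcomm : Commute ((Ax K).map (aeval (mk ∘ X))) ((Ay K).map (aeval (mk ∘ X))) := by
    rw [← aeval_unique, ← IbbsXY_le_ker_iff_commute]
    exact (Ideal.Quotient.mkₐ_ker K (IbbsXY K)).ge
  rw [map_param]
  exact (congrFun (eq_param_of_commute _ hcomm) u).symm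

theorem X_sub_param_X_freeIdx_mem (u : Fin 4 × Fin 4) :
    X u - param (fun k => X (freeIdx k)) u ∈ IbbsXY K :=
  Ideal.Quotient.eq.1 (mk_param_X_freeIdx K u).symm

noncomputable def paramHom : MvPolynomial (Fin 4 × Fin 4) K →ₐ[K] MvPolynomial (Fin 8) K :=
  aeval (param X)

theorem paramHom_comp_rename_freeIdx : (paramHom K).comp (rename freeIdx) = AlgHom.id K _ :=
  algHom_ext fun k => by rw [AlgHom.comp_apply, rename_X, paramHom, aeval_X, param_freeIdx,
    AlgHom.id_apply]

theorem ker_paramHom : RingHom.ker (paramHom K) = IbbsXY K := by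
  have hsection : (Ideal.Quotient.mkₐ K (IbbsXY K)).comp ((rename freeIdx).comp (paramHom K))
      = Ideal.Quotient.mkₐ K (IbbsXY K) := algHom_ext fun u => by
    rw [AlgHom.comp_apply, AlgHom.comp_apply, paramHom, aeval_X, map_param,
      Ideal.Quotient.mkₐ_eq_mk]
    simpa only [Function.comp_def, rename_X] using mk_param_X_freeIdx K u
  exact RingHom.ker_eq_of_mk_comp_eq (rename freeIdx : MvPolynomial (Fin 8) K →ₐ[K] _)
    ((IbbsXY_le_ker_iff_commute _).2 (commute_map_aeval_param X)) (AlgHom.congr_fun hsection)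

end BorderBasis1xy

open BorderBasis1xy

/-- For `O = {1, x, y, xy}` the ideal `I(𝔹_O)` contains, for each of the eight dependent
variables `c₁₁, c₁₂, c₁₃, c₁₄, c₂₂, c₂₄, c₃₁, c₃₃`, a generator of the form
(that variable) − (a polynomial in the eight free variables
`c₂₁, c₂₃, c₃₂, c₃₄, c₄₁, c₄₂, c₄₃, c₄₄`); consequently
`B_O = K[c_{ij}]/I(𝔹_O)` is isomorphic as a `K`-algebra to a polynomial ring in
eight indeterminates. -/
theorem borderBasisScheme_1xy_affineCell (K : Type*) [Field K] :
    (∀ v ∈ ({(0, 0), (0, 1), (0, 2), (0, 3), (1, 1), (1, 3), (2, 0), (2, 2)} :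
        Finset (Fin 4 × Fin 4)),
      ∃ p ∈ Algebra.adjoin K
          ((fun u : Fin 4 × Fin 4 => (X u : MvPolynomial (Fin 4 × Fin 4) K)) ''
            ({(1, 0), (1, 2), (2, 1), (2, 3), (3, 0), (3, 1), (3, 2), (3, 3)} :
              Set (Fin 4 × Fin 4))),
        X v - p ∈ IbbsXY K) ∧
    Nonempty ((MvPolynomial (Fin 4 × Fin 4) K ⧸ IbbsXY K) ≃ₐ[K] MvPolynomial (Fin 8) K) := by
  refine ⟨fun v _ => ⟨param (fun k => X (freeIdx k)) v, ?_, X_sub_param_X_freeIdx_mem K v⟩, ?_⟩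
  · rw [← range_freeIdx, ← Set.range_comp]
    exact param_mem_adjoin _ v
  · exact ⟨(Ideal.quotientEquivAlgOfEq K (ker_paramHom K).symm).trans
      (Ideal.quotientKerAlgEquivOfRightInverse
        (AlgHom.congr_fun (paramHom_comp_rename_freeIdx K)))⟩
end
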